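/- arXiv:1703.09477 — 6 statements merged into one kernel-verified Lean document; each statement's English description precedes it below -/
import Mathlib

section
/- Let f ∈ Γ₀(X) with argmin f ≠ ∅, Ω ⊂ X, and p ∈ [1, ∞). If ∂f is p-metrically subregular on Ω with constant γ > 0, then f satisfies the p-Łojasiewicz inequality on Ω with constant c = γ^{-1/p}: (f(x) - inf f)^{1 - 1/p} ≤ c·‖∂f(x)‖₋ for all x ∈ Ω ∩ dom f. -/
open Set Metric
open scoped ENNReal

variable {X : Type*} [NormedAddCommGroup X] [InnerProductSpace ℝ X] [CompleteSpace X]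

/-- The Fenchel subdifferential of `f` at `x`. -/
def fsubdiff (f : X → ℝ) (x : X) : Set X := {v | ∀ y, f x + (inner ℝ v (y - x) : ℝ) ≤ f y}

/-- `‖∂f(x)‖₋`: the infimum of the norms of the subgradients of `f` at `x`
(`∞` if the subdifferential is empty). -/
noncomputable def dnorm (f : X → ℝ) (x : X) : ℝ≥0∞ :=
  ⨅ v ∈ fsubdiff f x, (‖v‖₊ : ℝ≥0∞)

/-! With `a = f x - inf f`, `d = dist(x, argmin f)` and `n = ‖v‖` for a subgradient `v`,
the subgradient inequality at a minimizer gives `a ≤ n d` and subregularity gives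
`γ d^(p-1) ≤ n`. Hence
`a^(1-1/p) ≤ n^(1-1/p) (d^(p-1))^(1/p) ≤ n^(1-1/p) (n/γ)^(1/p) = γ^(-1/p) n`. -/

lemma rpow_one_sub_inv_le_of_le_mul {a d n γ p : ℝ} (ha : 0 ≤ a) (hd : 0 ≤ d)
    (hγ : 0 < γ) (hp : 1 ≤ p) (hle : a ≤ n * d) (hsub : γ * d ^ (p - 1) ≤ n) :
    a ^ (1 - 1 / p) ≤ γ ^ (-(1 : ℝ) / p) * n := by
  have hp0 : 0 < p := by linarith
  have hn : 0 ≤ n := le_trans (by positivity) hsub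
  have hexp : 0 ≤ 1 - 1 / p := sub_nonneg.2 ((div_le_one hp0).2 hp)
  have hd_pow : d ^ (1 - 1 / p) = (d ^ (p - 1)) ^ (1 / p) := by
    rw [← Real.rpow_mul hd]
    congr 1
    field_simp
  have hd_le : d ^ (p - 1) ≤ n / γ := by
    rw [le_div_iff₀ hγ]
    linarith
  calc a ^ (1 - 1 / p) ≤ (n * d) ^ (1 - 1 / p) := Real.rpow_le_rpow ha hle hexp
    _ = n ^ (1 - 1 / p) * (d ^ (p - 1)) ^ (1 / p) := by rw [Real.mul_rpow hn hd, hd_pow]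
    _ ≤ n ^ (1 - 1 / p) * (n / γ) ^ (1 / p) := by gcongr
    _ = γ ^ (-(1 : ℝ) / p) * n ^ (1 - 1 / p + 1 / p) := by
      rw [Real.div_rpow hn hγ.le, Real.rpow_add' hn (by norm_num), neg_div, Real.rpow_neg hγ.le]
      ring
    _ = γ ^ (-(1 : ℝ) / p) * n := by norm_num

lemma le_mul_infDist_of_forall_le_mul_dist {α : Type*} [PseudoMetricSpace α] {x : α}
    {s : Set α} {c K : ℝ} (hs : s.Nonempty) (hK : 0 ≤ K)
    (h : ∀ y ∈ s, c ≤ K * dist x y) : c ≤ K * infDist x s := by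
  have : Nonempty s := hs.to_subtype
  rw [infDist_eq_iInf, Real.mul_iInf_of_nonneg hK]
  exact le_ciInf fun y => h y y.2

lemma ciInf_eq_of_forall_le {α : Type*} {f : α → ℝ} {z : α} (hz : ∀ y, f z ≤ f y) :
    ⨅ y, f y = f z :=
  have : Nonempty α := ⟨z⟩
  le_antisymm (ciInf_le ⟨f z, forall_mem_range.2 hz⟩ z) (le_ciInf hz)

section Subgradient

variable {E : Type*} [NormedAddCommGroup E] [InnerProductSpace ℝ E] {f : E → ℝ} {x v : E}

lemma sub_le_norm_mul_dist_of_mem_fsubdiff (hv : v ∈ fsubdiff f x) (y : E) :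
    f x - f y ≤ ‖v‖ * dist x y := by
  have hcs : inner ℝ v (x - y) ≤ ‖v‖ * ‖x - y‖ := real_inner_le_norm v _
  have hneg : inner ℝ v (y - x) = -inner ℝ v (x - y) := by
    rw [← inner_neg_right, neg_sub]
  have := hv y
  rw [dist_eq_norm]
  linarith

lemma sub_iInf_le_norm_mul_infDist (hv : v ∈ fsubdiff f x)
    (hmin : {z : E | ∀ y, f z ≤ f y}.Nonempty) :
    f x - ⨅ y, f y ≤ ‖v‖ * infDist x {z : E | ∀ y, f z ≤ f y} :=
  le_mul_infDist_of_forall_le_mul_dist hmin (norm_nonneg v) fun z hz => by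
    rw [ciInf_eq_of_forall_le hz]
    exact sub_le_norm_mul_dist_of_mem_fsubdiff hv z

lemma le_norm_of_ofReal_le_dnorm {r : ℝ} (h : ENNReal.ofReal r ≤ dnorm f x)
    (hv : v ∈ fsubdiff f x) : r ≤ ‖v‖ := by
  have : ENNReal.ofReal r ≤ ENNReal.ofReal ‖v‖ := by
    rw [ofReal_norm, enorm_eq_nnnorm]
    exact h.trans (iInf₂_le v hv)
  exact (ENNReal.ofReal_le_ofReal_iff (norm_nonneg v)).1 this

lemma le_mul_dnorm {a c : ℝ≥0∞} (hc₀ : c ≠ 0) (hc : c ≠ ∞)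
    (h : ∀ v ∈ fsubdiff f x, a ≤ c * ‖v‖₊) : a ≤ c * dnorm f x := by
  rw [← ENNReal.div_le_iff' hc₀ hc]
  exact le_iInf₂ fun v hv => (ENNReal.div_le_iff' hc₀ hc).2 (h v hv)

end Subgradient

theorem stmt2_general (f : X → ℝ) (Ω : Set X) (p γ : ℝ) (hp : 1 ≤ p) (hγ : 0 < γ)
    (hmin : {z : X | ∀ y, f z ≤ f y}.Nonempty)
    (hsub : ∀ x ∈ Ω, ENNReal.ofReal (γ * infDist x {z : X | ∀ y, f z ≤ f y} ^ (p - 1))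
      ≤ dnorm f x) :
    ∀ x ∈ Ω, ENNReal.ofReal ((f x - ⨅ y, f y) ^ (1 - 1/p))
      ≤ ENNReal.ofReal (γ ^ (-(1:ℝ)/p)) * dnorm f x := by
  intro x hx
  obtain ⟨z, hz⟩ := hmin
  have hc : 0 < γ ^ (-(1 : ℝ) / p) := Real.rpow_pos_of_pos hγ _
  have hgap : 0 ≤ f x - ⨅ y, f y := by
    rw [ciInf_eq_of_forall_le hz, sub_nonneg]
    exact hz x
  refine le_mul_dnorm (ENNReal.ofReal_pos.2 hc).ne' ENNReal.ofReal_ne_top fun v hv => ?_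
  rw [← enorm_eq_nnnorm, ← ofReal_norm, ← ENNReal.ofReal_mul hc.le]
  exact ENNReal.ofReal_le_ofReal <| rpow_one_sub_inv_le_of_le_mul hgap infDist_nonneg hγ hp
    (sub_iInf_le_norm_mul_infDist hv ⟨z, hz⟩) (le_norm_of_ofReal_le_dnorm (hsub x hx) hv)

/-- If `∂f` is `p`-metrically subregular on `Ω` with constant `γ`, then `f` is
`p`-Łojasiewicz on `Ω` with constant `c = γ^(-1/p)`. -/
theorem stmt2 (f : X → ℝ) (hconv : ConvexOn ℝ univ f)
    (hlsc : LowerSemicontinuous f) (Ω : Set X) (p γ : ℝ) (hp : 1 ≤ p) (hγ : 0 < γ)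
    (hmin : {z : X | ∀ y, f z ≤ f y}.Nonempty)
    (hsub : ∀ x ∈ Ω, ENNReal.ofReal (γ * infDist x {z : X | ∀ y, f z ≤ f y} ^ (p - 1))
      ≤ dnorm f x) :
    ∀ x ∈ Ω, ENNReal.ofReal ((f x - ⨅ y, f y) ^ (1 - 1/p))
      ≤ ENNReal.ofReal (γ ^ (-(1:ℝ)/p)) * dnorm f x :=
  stmt2_general f Ω p γ hp hγ hmin hsub
end

section
/- Let A : X → Y be a bounded linear operator between Hilbert spaces with σ := inf of the nonzero spectrum of A*A strictly positive, y ∈ range A, and f(x) = (1/2)‖Ax - y‖². Then f is globally 2-conditioned with constant σ: for all x ∈ X, (σ/2)·dist(x, argmin f)² ≤ f(x) - inf f. -/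
/-!
Write `T = A† ∘L A`. The spectrum of the self-adjoint operator `T - σ/2` avoids `(-σ/2, σ/2)`,
so its inverse has spectral radius, hence norm, at most `2/σ`; expanding
`σ/2 ‖v‖ ≤ ‖T v - σ/2 v‖` gives `σ ⟪T v, v⟫ ≤ ‖T v‖²`. For `u = T w`, Cauchy–Schwarz gives
`‖u‖² = ⟪A w, A u⟫ ≤ ‖A w‖ ‖A u‖`, and with `σ ‖A w‖² ≤ ‖u‖²` this yields `σ ‖u‖² ≤ ‖A u‖²` on the
range of `T`, hence on its closure `(ker A)ᗮ`. Finally, if `y = A x₀` then `inf f = 0`,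
`argmin f = A⁻¹{y}`, and the component `u` of `x - x₀` orthogonal to `ker A` satisfies
`A u = A x - y` and `dist(x, argmin f) ≤ ‖u‖`.
-/

open Set Metric ContinuousLinearMap
open scoped InnerProduct

variable {X : Type*} [NormedAddCommGroup X] [InnerProductSpace ℝ X] [CompleteSpace X]
variable {Y : Type*} [NormedAddCommGroup Y] [InnerProductSpace ℝ Y] [CompleteSpace Y]

theorem IsSelfAdjoint.mul_norm_le_norm_apply {𝕜 E : Type*} [RCLike 𝕜] [NormedAddCommGroup E]
    [InnerProductSpace 𝕜 E] [CompleteSpace E] {R : E →L[𝕜] E} (hR : IsSelfAdjoint R) {r : ℝ}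
    (hr : 0 < r) (hspec : ∀ μ ∈ spectrum 𝕜 R, r ≤ ‖μ‖) (v : E) : r * ‖v‖ ≤ ‖R v‖ := by
  obtain ⟨U, rfl⟩ : IsUnit R := (spectrum.zero_notMem_iff 𝕜).mp fun h => by
    simpa using hr.trans_le (hspec 0 h)
  have hinv : IsSelfAdjoint (↑U⁻¹ : E →L[𝕜] E) := Ring.inverse_unit U ▸ hR.ringInverse
  have hnorm : ‖(↑U⁻¹ : E →L[𝕜] E)‖ ≤ r⁻¹ := by
    have hrad := ContinuousLinearMap.spectralRadius_eq_nnnorm _ hinv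
    rw [spectralRadius, ← spectrum.map_inv] at hrad
    have : (‖(↑U⁻¹ : E →L[𝕜] E)‖₊ : ENNReal) ≤ ENNReal.ofReal r⁻¹ := hrad ▸ iSup₂_le fun k hk => by
      have hk' : r ≤ ‖k‖⁻¹ := norm_inv k ▸ hspec k⁻¹ hk
      rw [← enorm_eq_nnnorm, ← ofReal_norm]
      exact ENNReal.ofReal_le_ofReal ((le_inv_comm₀ hr (inv_pos.mp (hr.trans_le hk'))).mp hk')
    simpa using ENNReal.toReal_le_of_le_ofReal (by positivity) this
  calc r * ‖v‖ = r * ‖(↑U⁻¹ : E →L[𝕜] E) ((U : E →L[𝕜] E) v)‖ := by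
        rw [← mul_apply_eq_comp, Units.inv_mul, one_apply_eq_self]
    _ ≤ r * (r⁻¹ * ‖(U : E →L[𝕜] E) v‖) := by
        gcongr; exact (le_opNorm _ _).trans (by gcongr)
    _ = ‖(U : E →L[𝕜] E) v‖ := by field_simp

theorem IsSelfAdjoint.mul_inner_le_sq_norm_apply {T : X →L[ℝ] X} (hT : IsSelfAdjoint T) {σ : ℝ}
    (hσ : 0 < σ) (hspec : ∀ μ ∈ spectrum ℝ T, μ = 0 ∨ σ ≤ μ) (v : X) :
    σ * inner ℝ (T v) v ≤ ‖T v‖ ^ 2 := by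
  have hR : IsSelfAdjoint (T - algebraMap ℝ (X →L[ℝ] X) (σ / 2)) :=
    hT.sub (.algebraMap _ (.all _))
  have hspecR : ∀ μ ∈ spectrum ℝ (T - algebraMap ℝ (X →L[ℝ] X) (σ / 2)), σ / 2 ≤ ‖μ‖ := by
    rw [← spectrum.sub_singleton_eq, Set.sub_singleton]
    rintro _ ⟨μ, hμ, rfl⟩
    rcases hspec μ hμ with rfl | h
    · simp [abs_of_pos hσ]
    · exact (Real.le_norm_self _).trans' (by linarith)
  have h := hR.mul_norm_le_norm_apply (half_pos hσ) hspecR v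
  rw [sub_apply, ContinuousLinearMap.algebraMap_apply, ← sq_le_sq₀ (by positivity) (norm_nonneg _),
    norm_sub_sq_real, real_inner_smul_right, norm_smul, Real.norm_of_nonneg (by positivity)] at h
  nlinarith

theorem ContinuousLinearMap.mul_sq_norm_le_of_mem_range_adjoint_comp_self (A : X →L[ℝ] Y)
    {σ : ℝ} (hσ : 0 ≤ σ) (hA : ∀ w, σ * ‖A w‖ ^ 2 ≤ ‖(A†) (A w)‖ ^ 2) {u : X}
    (hu : u ∈ (A† ∘L A).range) : σ * ‖u‖ ^ 2 ≤ ‖A u‖ ^ 2 := by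
  obtain ⟨w, rfl⟩ := hu
  change σ * ‖(A†) (A w)‖ ^ 2 ≤ ‖A ((A†) (A w))‖ ^ 2
  set u := (A†) (A w)
  have hinner : ‖u‖ ^ 2 ≤ ‖A w‖ * ‖A u‖ := by
    rw [← real_inner_self_eq_norm_sq, adjoint_inner_left]
    exact real_inner_le_norm _ _
  rcases (norm_nonneg u).eq_or_lt with h0 | hpos
  · simp [← h0]
  refine le_of_mul_le_mul_right ?_ (pow_pos hpos 2)
  calc σ * ‖u‖ ^ 2 * ‖u‖ ^ 2 = σ * (‖u‖ ^ 2) ^ 2 := by ring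
    _ ≤ σ * (‖A w‖ * ‖A u‖) ^ 2 := by gcongr
    _ = σ * ‖A w‖ ^ 2 * ‖A u‖ ^ 2 := by ring
    _ ≤ ‖u‖ ^ 2 * ‖A u‖ ^ 2 := by gcongr; exact hA w
    _ = ‖A u‖ ^ 2 * ‖u‖ ^ 2 := by ring

theorem ContinuousLinearMap.mul_sq_norm_le_of_mem_orthogonal_ker (A : X →L[ℝ] Y) {σ : ℝ}
    (hσ : 0 < σ) (hspec : ∀ μ ∈ spectrum ℝ (A† ∘L A), μ = 0 ∨ σ ≤ μ) {u : X}
    (hu : u ∈ A.kerᗮ) : σ * ‖u‖ ^ 2 ≤ ‖A u‖ ^ 2 := by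
  have hT := (isPositive_adjoint_comp_self A).isSelfAdjoint
  have hA (w : X) : σ * ‖A w‖ ^ 2 ≤ ‖(A†) (A w)‖ ^ 2 := by
    simpa [adjoint_inner_left, real_inner_self_eq_norm_sq] using
      hT.mul_inner_le_sq_norm_apply hσ hspec w
  rw [← ker_adjoint_comp_self, orthogonal_ker, hT.adjoint_eq, ← SetLike.mem_coe,
    Submodule.topologicalClosure_coe] at hu
  exact closure_minimal (t := {v | σ * ‖v‖ ^ 2 ≤ ‖A v‖ ^ 2})
    (fun _ hv => mem_ofPred.mpr (A.mul_sq_norm_le_of_mem_range_adjoint_comp_self hσ.le hA hv))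
    (isClosed_le (by fun_prop) (by fun_prop)) hu

theorem setOf_forall_le_eq_setOf_eq_zero {α : Type*} {f : α → ℝ} (hf : ∀ z, 0 ≤ f z) {a : α}
    (ha : f a = 0) : {z | ∀ w, f z ≤ f w} = {z | f z = 0} := by
  ext z
  exact ⟨fun h => le_antisymm (ha ▸ h a) (hf z), fun h w => h ▸ hf w⟩

/-- If the infimum `σ` of the nonzero spectrum of `A*A` is positive and `y ∈ range A`,
then the least squares functional `f(x) = (1/2)‖Ax - y‖²` is globally `2`-conditioned
with constant `σ`. -/
theorem stmt6 (A : X →L[ℝ] Y) (y : Y) (hy : y ∈ Set.range A) (σ : ℝ)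
    (hσ : σ = sInf (spectrum ℝ ((ContinuousLinearMap.adjoint A).comp A) \ {0}))
    (hσpos : 0 < σ) :
    ∀ x : X,
      σ / 2 * infDist x {z : X | ∀ w, (1:ℝ)/2 * ‖A z - y‖ ^ 2 ≤ (1:ℝ)/2 * ‖A w - y‖ ^ 2} ^ 2
        ≤ (1:ℝ)/2 * ‖A x - y‖ ^ 2 - ⨅ z : X, (1:ℝ)/2 * ‖A z - y‖ ^ 2 := by
  intro x
  obtain ⟨x₀, rfl⟩ := hy
  have hspec (μ : ℝ) (hμ : μ ∈ spectrum ℝ (A† ∘L A)) : μ = 0 ∨ σ ≤ μ :=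
    or_iff_not_imp_left.mpr fun h0 =>
      hσ ▸ csInf_le ((spectrum.isCompact _).bddBelow.mono sdiff_subset) ⟨hμ, h0⟩
  set f : X → ℝ := fun z => 1 / 2 * ‖A z - A x₀‖ ^ 2
  have hf (z : X) : 0 ≤ f z := by positivity
  have hfx₀ : f x₀ = 0 := by simp [f]
  change σ / 2 * infDist x {z | ∀ w, f z ≤ f w} ^ 2 ≤ f x - ⨅ z, f z
  rw [setOf_forall_le_eq_setOf_eq_zero hf hfx₀,
    ciInf_eq_of_forall_ge_of_forall_gt_exists_lt hf fun _ hw => ⟨x₀, hfx₀ ▸ hw⟩, sub_zero]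
  set u := A.kerᗮ.starProjection (x - x₀) with hu_def
  have hAu : A u = A x - A x₀ := by
    have hker : A (A.ker.starProjection (x - x₀)) = 0 := A.ker.starProjection_apply_mem _
    rw [hu_def, Submodule.starProjection_orthogonal_val, map_sub, hker, map_sub, sub_zero]
  have hdist : infDist x {z | f z = 0} ≤ ‖u‖ :=
    calc infDist x {z | f z = 0} ≤ dist x (x - u) := infDist_le_dist_of_mem (by simp [f, hAu])
      _ = ‖u‖ := by simp
  have hbound : σ * ‖u‖ ^ 2 ≤ ‖A u‖ ^ 2 :=
    A.mul_sq_norm_le_of_mem_orthogonal_ker hσpos hspec (A.kerᗮ.starProjection_apply_mem _)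
  calc σ / 2 * infDist x {z | f z = 0} ^ 2 ≤ σ / 2 * ‖u‖ ^ 2 := by
        gcongr; exact infDist_nonneg
    _ ≤ f x := by simp only [f, ← hAu]; linarith
end

section
/- Let C, D be closed convex subsets of a Hilbert space X with C ∩ D ≠ ∅ and 0 ∈ sri(C - D). Then the function f(x) = max{dist(x, C), dist(x, D)} is 1-conditioned on every bounded set: for each bounded Ω ⊂ X there exists γ > 0 such that γ·dist(x, C ∩ D) ≤ max{dist(x, C), dist(x, D)} for all x ∈ Ω. -/
/-!
The cone generated by `C - D` is a closed subspace `V`. Fix `e ∈ C ∩ D`; by Baire's theorem the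
closure of the convex set `{c - d | c ∈ C, d ∈ D, dist c e, dist d e ≤ R}` contains a ball of `V`
around `0`. Taking a convex combination with a point of that set moves any pair `(c, d)` of the
bounded part of `C × D` to one with arbitrarily small `c - d`, at a cost proportional to
`‖c - d‖`; iterating with geometrically decreasing tolerances converges, by completeness, to a
point of `C ∩ D`. Hence `dist (c, C ∩ D) ≤ K ‖c - d‖` on bounded sets, and choosing `c, d` nearly
nearest to `x` gives `dist (x, C ∩ D) ≤ (1 + 2K) max (dist (x, C), dist (x, D))`.
-/

open Set Metric

variable {X : Type*} [NormedAddCommGroup X] [InnerProductSpace ℝ X] [CompleteSpace X]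

/-- The strong relative interior of a set `S`: points `x ∈ S` such that the cone
generated by `S - x` is a closed linear subspace. -/
def sriSet (S : Set X) : Set X :=
  {x ∈ S | ∃ V : Submodule ℝ X, IsClosed (V : Set X) ∧
    (V : Set X) = {y | ∃ t : ℝ, 0 < t ∧ ∃ s ∈ S, y = t • (s - x)}}

open Filter Topology Pointwise

section Baire

variable {E : Type*} [NormedAddCommGroup E] [NormedSpace ℝ E] [CompleteSpace E]

theorem Convex.closure_mem_nhds_zero {S : Set E} (hS : Convex ℝ S)
    (habs : ∀ v, ∃ n : ℕ, v ∈ ((n : ℝ) + 1) • S) : closure S ∈ 𝓝 0 := by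
  have hcover : ⋃ n : ℕ, closure (((n : ℝ) + 1) • S) = univ :=
    eq_univ_of_forall fun v ↦
      let ⟨n, hn⟩ := habs v
      mem_iUnion.2 ⟨n, subset_closure hn⟩
  obtain ⟨n, hn⟩ := nonempty_interior_of_iUnion_of_closed (fun _ ↦ isClosed_closure) hcover
  rw [closure_smul₀, interior_smul₀ (by positivity)] at hn
  obtain ⟨_, w, hw, -⟩ := hn
  obtain ⟨m, y, hy, hyw⟩ := habs (-w)
  have h0 : (0 : E) ∈ openSegment ℝ w y := by
    refine ⟨1 / (m + 2), (m + 1) / (m + 2), by positivity, by positivity, by field_simp; ring, ?_⟩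
    have hy' : (((m : ℝ) + 1) / (m + 2)) • y = (1 / (m + 2) : ℝ) • -w := by
      rw [← hyw, smul_smul]
      congr 1
      ring
    rw [hy', smul_neg, add_neg_cancel]
  exact mem_interior_iff_mem_nhds.1 <|
    hS.closure.openSegment_interior_self_subset_interior hw (subset_closure hy) h0

theorem Submodule.exists_ball_subset_closure_of_convex (V : Submodule ℝ E)
    (hV : IsClosed (V : Set E)) {S : Set E} (hSV : S ⊆ V) (hS : Convex ℝ S)
    (habs : ∀ v ∈ V, ∃ n : ℕ, v ∈ ((n : ℝ) + 1) • S) :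
    ∃ δ > 0, ∀ v ∈ V, ‖v‖ < δ → v ∈ closure S := by
  have : CompleteSpace V := hV.completeSpace_coe
  have habsV : ∀ v : V, ∃ n : ℕ, v ∈ ((n : ℝ) + 1) • ((↑) ⁻¹' S : Set V) := fun v ↦ by
    obtain ⟨n, s, hs, hsv⟩ := habs v v.2
    exact ⟨n, ⟨s, hSV hs⟩, hs, Subtype.ext hsv⟩
  obtain ⟨δ, hδ, hball⟩ :=
    Metric.mem_nhds_iff.1 ((hS.linear_preimage V.subtype).closure_mem_nhds_zero habsV)
  refine ⟨δ, hδ, fun v hv hvδ ↦ ?_⟩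
  have hvS : (⟨v, hv⟩ : V) ∈ closure ((↑) ⁻¹' S) := hball (by simpa using hvδ)
  exact map_mem_closure continuous_subtype_val hvS fun _ ↦ id

end Baire

theorem exists_eq_zero_dist_le_of_forall_exists {α : Type*} [MetricSpace α] [CompleteSpace α]
    {g : α → ℝ} (hg : Continuous g) (hg0 : ∀ p, 0 ≤ g p) {K : ℝ} (hK : 0 ≤ K)
    (hstep : ∀ p, ∀ η > 0, ∃ q, g q ≤ η ∧ dist p q ≤ K * g p) (p : α) {θ : ℝ} (hθ : 0 < θ) :
    ∃ z, g z = 0 ∧ dist p z ≤ K * (g p + θ) := by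
  choose s hs using fun (n : ℕ) q ↦ hstep q (θ / 2 / 2 ^ n) (by positivity)
  let u : ℕ → α := fun n ↦ n.rec (s 0 p) fun n q ↦ s (n + 1) q
  have hgu : ∀ n, g (u n) ≤ θ / 2 / 2 ^ n := by
    rintro (_ | n)
    exacts [(hs 0 p).1, (hs (n + 1) (u n)).1]
  have hdist : ∀ n, dist (u n) (u (n + 1)) ≤ K * θ / 2 / 2 ^ n := fun n ↦
    calc dist (u n) (u (n + 1)) ≤ K * g (u n) := (hs (n + 1) (u n)).2
      _ ≤ K * (θ / 2 / 2 ^ n) := by gcongr; exact hgu n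
      _ = K * θ / 2 / 2 ^ n := by ring
  obtain ⟨z, hz⟩ := cauchySeq_tendsto_of_complete (cauchySeq_of_le_geometric_two hdist)
  refine ⟨z, ?_, ?_⟩
  · have hlim : Tendsto (fun n : ℕ ↦ θ / 2 / 2 ^ n) atTop (𝓝 0) :=
      tendsto_const_nhds.div_atTop (tendsto_pow_atTop_atTop_of_one_lt one_lt_two)
    exact tendsto_nhds_unique ((hg.tendsto z).comp hz) (squeeze_zero (fun _ ↦ hg0 _) hgu hlim)
  · calc dist p z ≤ dist p (u 0) + dist (u 0) z := dist_triangle _ _ _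
      _ ≤ K * g p + K * θ :=
        add_le_add (hs 0 p).2 (dist_le_of_le_geometric_two_of_tendsto₀ hdist hz)
      _ = K * (g p + θ) := by ring

section ConvexImage

variable {E F : Type*} [NormedAddCommGroup E] [NormedSpace ℝ E]
  [NormedAddCommGroup F] [NormedSpace ℝ F]

theorem Convex.exists_nat_smul_mem_image_inter_closedBall {P : Set E} (hP : Convex ℝ P)
    (T : E →ₗ[ℝ] F) {p₀ : E} (hp₀ : p₀ ∈ P) (hTp₀ : T p₀ = 0) {R : ℝ} (hR : 0 < R) {p : E}
    (hp : p ∈ P) {t : ℝ} (ht : 0 ≤ t) :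
    ∃ n : ℕ, t • T p ∈ ((n : ℝ) + 1) • T '' (P ∩ closedBall p₀ R) := by
  obtain ⟨n, hn⟩ := exists_nat_ge (t + t * dist p₀ p / R)
  have hdist : 0 ≤ t * dist p₀ p / R := by positivity
  set μ := t / (n + 1)
  have hμ0 : 0 ≤ μ := by positivity
  have hμ1 : μ ≤ 1 := div_le_one_of_le₀ (by linarith) (by positivity)
  have hμR : μ * dist p₀ p ≤ R := by
    have := (div_le_iff₀ hR).1 (show t * dist p₀ p / R ≤ n + 1 by linarith)
    rw [div_mul_eq_mul_div, div_le_iff₀ (by positivity)]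
    linarith
  refine ⟨n, T (AffineMap.lineMap p₀ p μ),
    ⟨_, ⟨hP.lineMap_mem hp₀ hp ⟨hμ0, hμ1⟩, ?_⟩, rfl⟩, ?_⟩
  · rw [mem_closedBall, dist_lineMap_left, Real.norm_of_nonneg hμ0]
    exact hμR
  · simp only [AffineMap.lineMap_apply, vsub_eq_sub, vadd_eq_add, map_add, map_smul, map_sub,
      hTp₀, sub_zero, add_zero, smul_smul, μ]
    rw [mul_div_cancel₀ _ (by positivity)]

theorem Convex.exists_norm_map_le_dist_le {A : Set E} (hA : Convex ℝ A)
    (hAb : Bornology.IsBounded A) (T : E →ₗ[ℝ] F) (V : Submodule ℝ F) (hTA : ∀ a ∈ A, T a ∈ V)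
    {δ : ℝ} (hδ : 0 < δ) (hball : ∀ v ∈ V, ‖v‖ < δ → v ∈ closure (T '' A)) {p : E}
    (hp : p ∈ A) {η : ℝ} (hη : 0 < η) :
    ∃ q ∈ A, ‖T q‖ ≤ η ∧ dist p q ≤ 2 * diam A / δ * ‖T p‖ := by
  rcases eq_or_ne (T p) 0 with hTp | hTp
  · exact ⟨p, hp, by simpa [hTp] using hη.le, by simp [hTp]⟩
  set N := ‖T p‖
  have hN : 0 < N := norm_pos_iff.2 hTp
  set w := -(δ / (2 * N)) • T p
  have hw : ‖w‖ < δ := by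
    rw [norm_smul, norm_neg, Real.norm_of_nonneg (by positivity)]
    field_simp
    linarith
  obtain ⟨_, ⟨a, ha, rfl⟩, hwa⟩ :=
    Metric.mem_closure_iff.1 (hball w (V.smul_mem _ (hTA p hp)) hw) η hη
  -- moving from `p` towards `a` by the fraction `τ`, the `T p`-components cancel
  set τ := 2 * N / (δ + 2 * N)
  have hτ0 : 0 ≤ τ := by positivity
  have hτ1 : τ ≤ 1 := div_le_one_of_le₀ (by linarith) (by positivity)
  have hτw : τ • w = -(1 - τ) • T p := by
    have : τ * (δ / (2 * N)) = 1 - τ := by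
      simp only [τ]
      field_simp
      ring
    simp only [w, smul_smul, mul_neg, this]
  refine ⟨(1 - τ) • p + τ • a, hA hp ha (by linarith) hτ0 (by ring), ?_, ?_⟩
  · have hTq : T ((1 - τ) • p + τ • a) = τ • (T a - w) := by
      rw [map_add, map_smul, map_smul, smul_sub, hτw]
      module
    rw [hTq, norm_smul, Real.norm_of_nonneg hτ0, ← dist_eq_norm, dist_comm]
    exact (mul_le_of_le_one_left dist_nonneg hτ1).trans hwa.le
  · have hpq : p - ((1 - τ) • p + τ • a) = τ • (p - a) := by module
    rw [dist_eq_norm, hpq, norm_smul, Real.norm_of_nonneg hτ0, ← dist_eq_norm]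
    calc τ * dist p a ≤ 2 * N / δ * diam A :=
          mul_le_mul (div_le_div_of_nonneg_left (by positivity) hδ (by linarith))
            (dist_le_diam_of_mem hAb hp ha) dist_nonneg (by positivity)
      _ = 2 * diam A / δ * N := by ring

theorem Convex.exists_map_eq_zero_dist_le [CompleteSpace E] {A : Set E} (hA : Convex ℝ A)
    (hAc : IsClosed A) (hAb : Bornology.IsBounded A) (T : E →L[ℝ] F) (V : Submodule ℝ F)
    (hTA : ∀ a ∈ A, T a ∈ V) {δ : ℝ} (hδ : 0 < δ)
    (hball : ∀ v ∈ V, ‖v‖ < δ → v ∈ closure (T '' A)) {p : E} (hp : p ∈ A) {θ : ℝ}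
    (hθ : 0 < θ) : ∃ z ∈ A, T z = 0 ∧ dist p z ≤ 2 * diam A / δ * (‖T p‖ + θ) := by
  have : CompleteSpace A := hAc.completeSpace_coe
  have hstep (q : A) (η : ℝ) (hη : 0 < η) :
      ∃ q' : A, ‖T q'‖ ≤ η ∧ dist q q' ≤ 2 * diam A / δ * ‖T q‖ := by
    obtain ⟨a, ha, hTa, hqa⟩ := hA.exists_norm_map_le_dist_le hAb T V hTA hδ hball q.2 hη
    exact ⟨⟨a, ha⟩, hTa, hqa⟩
  obtain ⟨z, hz0, hpz⟩ := exists_eq_zero_dist_le_of_forall_exists (g := fun a : A ↦ ‖T a‖)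
    (by fun_prop) (fun _ ↦ norm_nonneg _) (by positivity) hstep ⟨p, hp⟩ hθ
  exact ⟨z, z.2, norm_eq_zero.1 hz0, hpz⟩

end ConvexImage

theorem exists_mem_inter_dist_le_of_zero_mem_sriSet {C D : Set X} (hCcl : IsClosed C)
    (hCcv : Convex ℝ C) (hDcl : IsClosed D) (hDcv : Convex ℝ D) {e : X} (he : e ∈ C ∩ D)
    (hsri : (0 : X) ∈ sriSet {y | ∃ c ∈ C, ∃ d ∈ D, y = c - d}) {R : ℝ} (hR : 0 < R) :
    ∃ K ≥ 0, ∀ c ∈ C, ∀ d ∈ D, dist c e ≤ R → dist d e ≤ R →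
      ∀ θ > 0, ∃ z ∈ C ∩ D, dist c z ≤ K * (dist c d + θ) := by
  obtain ⟨-, V, hVcl, hV⟩ := hsri
  have hmemV : ∀ c ∈ C, ∀ d ∈ D, c - d ∈ V := fun c hc d hd ↦ by
    change c - d ∈ (V : Set X)
    rw [hV]
    exact ⟨1, one_pos, c - d, ⟨c, hc, d, hd, rfl⟩, by simp⟩
  let T : X × X →L[ℝ] X := ContinuousLinearMap.fst ℝ X X - ContinuousLinearMap.snd ℝ X X
  let A := (C ×ˢ D) ∩ closedBall (e, e) R
  have hTA : ∀ a ∈ A, T a ∈ V := fun a ha ↦ hmemV _ ha.1.1 _ ha.1.2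
  have hAcv : Convex ℝ A := (hCcv.prod hDcv).inter (convex_closedBall _ _)
  have habs : ∀ v ∈ V, ∃ n : ℕ, v ∈ ((n : ℝ) + 1) • T '' A := fun v hv ↦ by
    change v ∈ (V : Set X) at hv
    rw [hV] at hv
    obtain ⟨t, ht, _, ⟨c, hc, d, hd, rfl⟩, rfl⟩ := hv
    rw [sub_zero]
    exact (hCcv.prod hDcv).exists_nat_smul_mem_image_inter_closedBall
      (T : X × X →ₗ[ℝ] X) (p₀ := (e, e)) he (by simp [T]) hR (p := (c, d)) ⟨hc, hd⟩ ht.le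
  obtain ⟨δ, hδ, hball⟩ := V.exists_ball_subset_closure_of_convex hVcl
    (by rintro _ ⟨a, ha, rfl⟩; exact hTA a ha) (hAcv.linear_image (T : X × X →ₗ[ℝ] X)) habs
  refine ⟨2 * diam A / δ, by positivity, fun c hc d hd hce hde θ hθ ↦ ?_⟩
  have hcdA : (c, d) ∈ A := ⟨⟨hc, hd⟩, by simpa [Prod.dist_eq] using ⟨hce, hde⟩⟩
  obtain ⟨z, ⟨⟨hz₁, hz₂⟩, -⟩, hTz, hz⟩ := hAcv.exists_map_eq_zero_dist_le
    ((hCcl.prod hDcl).inter isClosed_closedBall) (isBounded_closedBall.subset inter_subset_right)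
    T V hTA hδ hball hcdA hθ
  have hz₁₂ : z.1 = z.2 := sub_eq_zero.1 hTz
  refine ⟨z.1, ⟨hz₁, hz₁₂ ▸ hz₂⟩, ?_⟩
  calc dist c z.1 ≤ dist (c, d) z := le_max_left _ _
    _ ≤ _ := by simpa [T, dist_eq_norm] using hz

theorem infDist_inter_le_of_forall_exists {α : Type*} [PseudoMetricSpace α] {C D : Set α}
    {e x : α} (he : e ∈ C ∩ D) {K R : ℝ} (hK : 0 ≤ K) (hxR : 2 * dist x e < R)
    (H : ∀ c ∈ C, ∀ d ∈ D, dist c e ≤ R → dist d e ≤ R →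
      ∀ θ > 0, ∃ z ∈ C ∩ D, dist c z ≤ K * (dist c d + θ)) :
    infDist x (C ∩ D) ≤ (1 + 2 * K) * max (infDist x C) (infDist x D) := by
  set ε := max (infDist x C) (infDist x D)
  have hεx : ε ≤ dist x e := max_le (infDist_le_dist_of_mem he.1) (infDist_le_dist_of_mem he.2)
  have hbound : ∀ ε' ∈ Ioo ε (R - dist x e),
      infDist x (C ∩ D) ≤ ε' + K * (2 * ε' + (ε' - ε)) := by
    rintro ε' ⟨hεε', hε'R⟩
    obtain ⟨c, hc, hxc⟩ := (infDist_lt_iff ⟨e, he.1⟩).1 ((le_max_left _ _).trans_lt hεε')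
    obtain ⟨d, hd, hxd⟩ := (infDist_lt_iff ⟨e, he.2⟩).1 ((le_max_right _ _).trans_lt hεε')
    have hcd : dist c d ≤ 2 * ε' := by linarith [dist_triangle_left c d x]
    obtain ⟨z, hz, hcz⟩ := H c hc d hd (by linarith [dist_triangle_left c e x])
      (by linarith [dist_triangle_left d e x]) (ε' - ε) (sub_pos.2 hεε')
    calc infDist x (C ∩ D) ≤ dist x c + dist c z :=
          (infDist_le_dist_of_mem hz).trans (dist_triangle _ _ _)
      _ ≤ ε' + K * (2 * ε' + (ε' - ε)) := by gcongr; exact hcz.trans (by gcongr)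
  have hlim : Tendsto (fun ε' ↦ ε' + K * (2 * ε' + (ε' - ε))) (𝓝[>] ε)
      (𝓝 ((1 + 2 * K) * ε)) := by
    have hcont : Continuous fun ε' : ℝ ↦ ε' + K * (2 * ε' + (ε' - ε)) := by fun_prop
    convert (hcont.tendsto ε).mono_left nhdsWithin_le_nhds using 2
    ring
  exact ge_of_tendsto hlim (eventually_of_mem (Ioo_mem_nhdsGT (by linarith)) hbound)

/-- If `C, D` are closed convex sets with `C ∩ D ≠ ∅` and `0 ∈ sri(C - D)`, then
`f(x) = max{dist(x,C), dist(x,D)}` is `1`-conditioned on every bounded set. -/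
theorem stmt7 (C D : Set X) (hCcl : IsClosed C) (hCcv : Convex ℝ C)
    (hDcl : IsClosed D) (hDcv : Convex ℝ D) (hne : (C ∩ D).Nonempty)
    (hsri : (0 : X) ∈ sriSet {y | ∃ c ∈ C, ∃ d ∈ D, y = c - d})
    (Ω : Set X) (hΩ : Bornology.IsBounded Ω) :
    ∃ γ > 0, ∀ x ∈ Ω, γ * infDist x (C ∩ D) ≤ max (infDist x C) (infDist x D) := by
  obtain ⟨e, he⟩ := hne
  obtain ⟨r, hr, hΩr⟩ := hΩ.subset_closedBall_lt 0 e
  obtain ⟨K, hK, H⟩ :=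
    exists_mem_inter_dist_le_of_zero_mem_sriSet hCcl hCcv hDcl hDcv he hsri (R := 2 * r + 1)
      (by linarith)
  refine ⟨(1 + 2 * K)⁻¹, by positivity, fun x hx ↦ ?_⟩
  rw [inv_mul_le_iff₀ (by positivity)]
  exact infDist_inter_le_of_forall_exists he hK (by linarith [mem_closedBall.1 (hΩr hx)]) H
end

section
/- Let g ∈ Γ₀(X), h : X → ℝ convex differentiable with L-Lipschitz gradient, f = g + h, λ > 0, and T_λ x := prox_{λg}(x - λ∇h(x)). Then for all x, u ∈ X: ‖T_λ x - u‖² - ‖x - u‖² ≤ (λL - 1)·‖T_λ x - x‖² + 2λ·(f(u) - f(T_λ x)). -/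
/-!
With `z = x - λ∇h(x)`, minimality of `T` for `g + ‖· - z‖² / (2λ)` gives the variational
inequality `⟪z - T, u - T⟫ ≤ λ (g u - g T)`: along the segment from `T` to `u` the difference
quotients of `g` are bounded by `g u - g T` (convexity), while those of the quadratic tend to
its derivative. Adding `λ` times the gradient inequality `⟪∇h(x), u - x⟫ ≤ h u - h x` and the
descent lemma `h T ≤ h x + ⟪∇h(x), T - x⟫ + (L/2)‖T - x‖²`, the left-hand side
`‖T - u‖² - ‖x - u‖² = 2⟪x - T, u - T⟫ - ‖T - x‖²` is bounded as claimed.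
-/

open Set

variable {X : Type*} [NormedAddCommGroup X] [InnerProductSpace ℝ X] [CompleteSpace X]

open AffineMap Filter Topology RealInnerProductSpace

section LineRestriction

variable {E F : Type*} [NormedAddCommGroup E] [NormedSpace ℝ E]
  [NormedAddCommGroup F] [NormedSpace ℝ F]

theorem HasFDerivAt.hasDerivAt_comp_lineMap {f : E → F} {f' : E →L[ℝ] F} {x y : E} {t : ℝ}
    (hf : HasFDerivAt f f' (lineMap x y t)) :
    HasDerivAt (f ∘ lineMap x y) (f' (y - x)) t :=
  hf.comp_hasDerivAt t hasDerivAt_lineMap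

end LineRestriction

section Convex

variable {E : Type*} [NormedAddCommGroup E] [NormedSpace ℝ E]

theorem ConvexOn.apply_sub_le_of_hasFDerivAt {f : E → ℝ} {f' : E →L[ℝ] ℝ} {x : E}
    (hf : ConvexOn ℝ univ f) (hf' : HasFDerivAt f f' x) (y : E) :
    f' (y - x) ≤ f y - f x := by
  have hline : ConvexOn ℝ univ (f ∘ lineMap (k := ℝ) x y) := hf.comp_affineMap (lineMap x y)
  have hder : HasDerivAt (f ∘ lineMap x y) (f' (y - x)) (0 : ℝ) :=
    HasFDerivAt.hasDerivAt_comp_lineMap (by simpa using hf')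
  simpa [slope_def_field] using
    hline.le_slope_of_hasDerivAt (mem_univ 0) (mem_univ 1) zero_lt_one hder

theorem ConvexOn.neg_apply_sub_le_of_isMinOn_add {g q : E → ℝ} {q' : E →L[ℝ] ℝ} {T : E}
    (hg : ConvexOn ℝ univ g) (hq : HasFDerivAt q q' T) (hmin : IsMinOn (g + q) univ T)
    (u : E) : -q' (u - T) ≤ g u - g T := by
  have hslope : Tendsto (slope (q ∘ lineMap T u) 0) (𝓝[>] (0 : ℝ)) (𝓝 (q' (u - T))) :=
    (hasDerivAt_iff_tendsto_slope.mp
      (HasFDerivAt.hasDerivAt_comp_lineMap (by simpa using hq))).mono_left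
      (nhdsWithin_mono _ fun t ht => ne_of_gt ht)
  refine neg_le.mp (ge_of_tendsto hslope ?_)
  filter_upwards [Ioc_mem_nhdsGT_of_mem (left_mem_Ico.mpr one_pos)] with t ⟨ht0, ht1⟩
  have hsecant : g (lineMap T u t) ≤ (1 - t) * g T + t * g u := by
    simpa [lineMap_apply_module] using
      hg.2 (mem_univ T) (mem_univ u) (by linarith) ht0.le (by ring)
  have hmin_t : g T + q T ≤ g (lineMap T u t) + q (lineMap T u t) := hmin (mem_univ _)
  rw [slope_def_field, le_div_iff₀ (by simpa using ht0)]
  simp only [Function.comp_apply, lineMap_apply_zero, sub_zero]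
  nlinarith

end Convex

section Prox

variable {E : Type*} [NormedAddCommGroup E] [InnerProductSpace ℝ E]

theorem ConvexOn.inner_sub_le_of_isMinOn_prox {g : E → ℝ} {lam : ℝ} {z T : E}
    (hg : ConvexOn ℝ univ g) (hlam : 0 < lam)
    (hT : IsMinOn (fun w => g w + 1 / (2 * lam) * ‖w - z‖ ^ 2) univ T) (u : E) : ⟪z - T, u - T⟫ ≤ lam * (g u - g T) := by
  have hq := (((hasFDerivAt_id T).sub_const z).norm_sq).const_mul (1 / (2 * lam))
  have hsub : -(1 / (2 * lam) * (2 * ⟪T - z, u - T⟫)) ≤ g u - g T := by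
    simpa [inner_sub_left] using hg.neg_apply_sub_le_of_isMinOn_add hq hT u
  calc ⟪z - T, u - T⟫ = lam * -(1 / (2 * lam) * (2 * ⟪T - z, u - T⟫)) := by
        rw [← neg_sub T z, inner_neg_left]; field_simp
    _ ≤ lam * (g u - g T) := by gcongr

end Prox

section Descent

variable {E : Type*} [NormedAddCommGroup E] [InnerProductSpace ℝ E] [CompleteSpace E]

theorem le_add_inner_add_of_gradient_lipschitz {f : E → ℝ} {f' : E → E} {L : ℝ}
    (hf : ∀ x, HasGradientAt f (f' x) x) (hlip : ∀ x y, ‖f' x - f' y‖ ≤ L * ‖x - y‖)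
    (x y : E) : f y ≤ f x + ⟪f' x, y - x⟫ + L / 2 * ‖y - x‖ ^ 2 := by
  set ψ : ℝ → ℝ := fun t =>
    f (lineMap x y t) - t * ⟪f' x, y - x⟫ - L / 2 * t ^ 2 * ‖y - x‖ ^ 2
  have hder : ∀ t, HasDerivAt ψ
      (⟪f' (lineMap x y t), y - x⟫ - ⟪f' x, y - x⟫ - L * t * ‖y - x‖ ^ 2) t := by
    intro t
    have hline : HasDerivAt (f ∘ lineMap x y) ⟪f' (lineMap x y t), y - x⟫ t := by
      simpa using (hf (lineMap x y t)).hasFDerivAt.hasDerivAt_comp_lineMap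
    refine ((hline.sub ((hasDerivAt_id t).mul_const _)).sub
      (((hasDerivAt_pow 2 t).const_mul (L / 2)).mul_const _)).congr_deriv ?_
    ring
  have hanti : AntitoneOn ψ (Icc 0 1) := by
    refine antitoneOn_of_hasDerivWithinAt_nonpos (convex_Icc 0 1)
      (fun t _ => (hder t).continuousAt.continuousWithinAt)
      (fun t _ => (hder t).hasDerivWithinAt) fun t ht => ?_
    rw [interior_Icc] at ht
    have hdist : ‖f' (lineMap x y t) - f' x‖ ≤ L * (t * ‖y - x‖) := by
      simpa [← dist_eq_norm, dist_lineMap_left, abs_of_pos ht.1, dist_comm x y] using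
        hlip (lineMap x y t) x
    have hinner : ⟪f' (lineMap x y t) - f' x, y - x⟫ ≤ L * t * ‖y - x‖ ^ 2 :=
      calc _ ≤ ‖f' (lineMap x y t) - f' x‖ * ‖y - x‖ := real_inner_le_norm _ _
        _ ≤ L * (t * ‖y - x‖) * ‖y - x‖ := by gcongr
        _ = L * t * ‖y - x‖ ^ 2 := by ring
    rw [inner_sub_left] at hinner
    linarith
  have hψ := hanti (left_mem_Icc.mpr zero_le_one) (right_mem_Icc.mpr zero_le_one) zero_le_one
  simp only [ψ, lineMap_apply_zero, lineMap_apply_one] at hψ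
  linarith

end Descent

theorem stmt12_general (g h : X → ℝ) (hg : ConvexOn ℝ univ g)
    (hconv : ConvexOn ℝ univ h)
    (h' : X → X) (hgrad : ∀ x, HasGradientAt h (h' x) x)
    (L lam : ℝ)
    (hlip : ∀ x y, ‖h' x - h' y‖ ≤ L * ‖x - y‖) (hlam : 0 < lam)
    (x u T : X)
    (hT : ∀ w, g T + 1 / (2 * lam) * ‖T - (x - lam • h' x)‖ ^ 2
      ≤ g w + 1 / (2 * lam) * ‖w - (x - lam • h' x)‖ ^ 2) :
    ‖T - u‖ ^ 2 - ‖x - u‖ ^ 2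
      ≤ (lam * L - 1) * ‖T - x‖ ^ 2 + 2 * lam * ((g u + h u) - (g T + h T)) := by
  have hprox := hg.inner_sub_le_of_isMinOn_prox hlam (fun w _ => hT w) u
  have hgradient : ⟪h' x, u - x⟫ ≤ h u - h x := by
    simpa using hconv.apply_sub_le_of_hasFDerivAt (hgrad x).hasFDerivAt u
  have hdescent := le_add_inner_add_of_gradient_lipschitz hgrad hlip x T
  have hexpand : ‖T - u‖ ^ 2 - ‖x - u‖ ^ 2 = 2 * ⟪x - lam • h' x - T, u - T⟫
      + 2 * lam * (⟪h' x, u - x⟫ - ⟪h' x, T - x⟫) - ‖T - x‖ ^ 2 := by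
    simp only [norm_sub_sq_real, inner_sub_left, inner_sub_right, real_inner_smul_left,
      real_inner_self_eq_norm_sq]
    rw [real_inner_comm T x]
    ring
  linarith [mul_le_mul_of_nonneg_left hgradient hlam.le,
    mul_le_mul_of_nonneg_left hdescent hlam.le]

/-- Fundamental descent estimate for the forward-backward map (Lemma A.2 i)):
if `T = prox_{λg}(x - λ∇h(x))` and `f = g + h`, then
`‖T - u‖² - ‖x - u‖² ≤ (λL - 1)‖T - x‖² + 2λ(f(u) - f(T))`. -/
theorem stmt12 (g h : X → ℝ) (hg : ConvexOn ℝ univ g)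
    (hglsc : LowerSemicontinuous g) (hconv : ConvexOn ℝ univ h)
    (h' : X → X) (hgrad : ∀ x, HasGradientAt h (h' x) x)
    (L lam : ℝ) (hL : 0 < L)
    (hlip : ∀ x y, ‖h' x - h' y‖ ≤ L * ‖x - y‖) (hlam : 0 < lam)
    (x u T : X)
    (hT : ∀ w, g T + 1 / (2 * lam) * ‖T - (x - lam • h' x)‖ ^ 2
      ≤ g w + 1 / (2 * lam) * ‖w - (x - lam • h' x)‖ ^ 2) :
    ‖T - u‖ ^ 2 - ‖x - u‖ ^ 2
      ≤ (lam * L - 1) * ‖T - x‖ ^ 2 + 2 * lam * ((g u + h u) - (g T + h T)) :=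
  stmt12_general g h hg hconv h' hgrad L lam hlip hlam x u T hT
end

section
/- Let f ∈ Γ₀(X) be p-conditioned with constant γ > 0 on a convex set Ω ⊂ X satisfying proj(Ω, argmin f) ⊊ Ω, and suppose f is differentiable on Ω with ∇f α-Hölder continuous on Ω (constant L). Then p ≥ α + 1; moreover if p = α + 1, then γ ≤ L. -/
open Set Metric

variable {X : Type*} [NormedAddCommGroup X] [InnerProductSpace ℝ X] [CompleteSpace X]

/-! Let `x ∈ Ω` be a point that is not a projection and `x₀ ∈ Ω` its projection onto
`S = argmin f`, at distance `d > 0`. On the segment `x₀ + t (x - x₀)` the distance to `S` is at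
least `t d`, while `∇f(x₀) = 0` and the Hölder descent lemma bound `f - inf f` by
`L / (α + 1) (t d) ^ (α + 1)`. Hence `γ / p r ^ p ≤ L / (α + 1) r ^ (α + 1)` for all
`r ∈ (0, d]`: letting `r → 0` forces `α + 1 ≤ p`, and `r = d` gives `γ ≤ L` when `p = α + 1`. -/

lemma LowerSemicontinuous.isClosed_setOf_forall_le {α β : Type*} [TopologicalSpace α]
    [LinearOrder β] [TopologicalSpace β] [OrderClosedTopology β] {f : α → β}
    (hf : LowerSemicontinuous f) : IsClosed {z | ∀ y, f z ≤ f y} := by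
  simpa only [ofPred_forall, preimage, mem_Iic] using
    isClosed_iInter fun y => hf.isClosed_preimage (f y)

lemma ConvexOn.convex_setOf_forall_le {E β : Type*} [AddCommMonoid E] [SMul ℝ E]
    [AddCommMonoid β] [PartialOrder β] [IsOrderedAddMonoid β] [Module ℝ β] [PosSMulMono ℝ β]
    {f : E → β} (hf : ConvexOn ℝ univ f) : Convex ℝ {z | ∀ y, f z ≤ f y} := by
  simpa only [ofPred_forall] using convex_iInter fun y => by simpa using hf.convex_le (f y)

lemma IsComplete.exists_dist_eq_infDist {F : Type*} [NormedAddCommGroup F]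
    [InnerProductSpace ℝ F] {K : Set F} (hne : K.Nonempty) (hK : IsComplete K)
    (hconv : Convex ℝ K) (x : F) : ∃ y ∈ K, dist x y = infDist x K := by
  obtain ⟨y, hyK, hy⟩ := exists_norm_eq_iInf_of_complete_convex hne hK hconv x
  refine ⟨y, hyK, le_antisymm ?_ (infDist_le_dist_of_mem hyK)⟩
  rw [infDist_eq_iInf, dist_eq_norm, hy]
  simp only [dist_eq_norm, le_refl]

lemma mul_infDist_le_infDist_add_smul_sub {E : Type*} [SeminormedAddCommGroup E]
    [NormedSpace ℝ E] {S : Set E} {x y : E} (hy : dist x y = infDist x S) {t : ℝ}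
    (ht : t ≤ 1) : t * infDist x S ≤ infDist (y + t • (x - y)) S := by
  have hdist : dist x (y + t • (x - y)) = (1 - t) * infDist x S := by
    rw [dist_eq_norm, show x - (y + t • (x - y)) = (1 - t) • (x - y) by module, norm_smul,
      Real.norm_of_nonneg (by linarith), ← dist_eq_norm, hy]
  linarith [infDist_le_infDist_add_dist (x := x) (y := y + t • (x - y)) (s := S)]

lemma IsLocalMin.hasGradientAt_eq_zero {f : X → ℝ} {f' a : X} (h : IsLocalMin f a)
    (hf : HasGradientAt f f' a) : f' = 0 := by
  simpa using h.hasFDerivAt_eq_zero hf.hasFDerivAt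

lemma HasGradientAt.hasDerivAt_add_smul {f : X → ℝ} {f' x v : X} {s : ℝ}
    (hf : HasGradientAt f f' (x + s • v)) :
    HasDerivAt (fun r : ℝ => f (x + r • v)) (inner ℝ f' v) s := by
  have hline : HasDerivAt (fun r : ℝ => x + r • v) v s := by
    simpa using ((hasDerivAt_id s).smul_const v).const_add x
  simpa [Function.comp_def] using hf.hasFDerivAt.comp_hasDerivAt s hline

/-- The descent lemma for a gradient that is `α`-Hölder on a convex set. -/
theorem sub_sub_inner_le_of_holder {f : X → ℝ} {f' : X → X} {Ω : Set X} (hΩ : Convex ℝ Ω)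
    {L α : ℝ} (hα : 0 ≤ α) (hdiff : ∀ x ∈ Ω, HasGradientAt f (f' x) x)
    (hhold : ∀ x ∈ Ω, ∀ y ∈ Ω, ‖f' x - f' y‖ ≤ L * ‖x - y‖ ^ α) {x y : X} (hx : x ∈ Ω)
    (hy : y ∈ Ω) : f y - f x - inner ℝ (f' x) (y - x) ≤ L / (α + 1) * ‖y - x‖ ^ (α + 1) := by
  set v := y - x
  set C := L / (α + 1) * ‖v‖ ^ (α + 1) with hC
  have hmem : ∀ s ∈ Icc (0 : ℝ) 1, x + s • v ∈ Ω := fun s hs => by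
    simpa [v, AffineMap.lineMap_apply_module', add_comm] using
      hΩ.lineMap_mem hx hy hs
  have hα1 : α + 1 ≠ 0 := by linarith
  -- `φ` is antitone on `[0, 1]`; comparing `φ 0` and `φ 1` is the claim.
  set φ : ℝ → ℝ := fun s => f (x + s • v) - s * inner ℝ (f' x) v - C * s ^ (α + 1)
  have hφ : ∀ s ∈ Icc (0 : ℝ) 1, HasDerivAt φ
      (inner ℝ (f' (x + s • v)) v - inner ℝ (f' x) v - C * ((α + 1) * s ^ α)) s := by
    intro s hs
    have hpow := Real.hasDerivAt_rpow_const (x := s) (p := α + 1) (Or.inr (by linarith))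
    rw [add_sub_cancel_right] at hpow
    exact ((hdiff _ (hmem s hs)).hasDerivAt_add_smul.sub
      (hasDerivAt_mul_const (inner ℝ (f' x) v))).sub (hpow.const_mul C)
  have hφ' : ∀ s ∈ Ioo (0 : ℝ) 1,
      inner ℝ (f' (x + s • v)) v - inner ℝ (f' x) v - C * ((α + 1) * s ^ α) ≤ 0 := by
    intro s hs
    have hnorm : ‖x + s • v - x‖ = s * ‖v‖ := by
      rw [add_sub_cancel_left, norm_smul, Real.norm_of_nonneg hs.1.le]
    suffices inner ℝ (f' (x + s • v)) v - inner ℝ (f' x) v ≤ C * ((α + 1) * s ^ α) by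
      linarith
    calc inner ℝ (f' (x + s • v)) v - inner ℝ (f' x) v
        = inner ℝ (f' (x + s • v) - f' x) v := (inner_sub_left _ _ _).symm
      _ ≤ ‖f' (x + s • v) - f' x‖ * ‖v‖ := real_inner_le_norm _ _
      _ ≤ L * ‖x + s • v - x‖ ^ α * ‖v‖ := by
          gcongr
          exact hhold _ (hmem s (Ioo_subset_Icc_self hs)) _ hx
      _ = C * ((α + 1) * s ^ α) := by
          rw [hnorm, Real.mul_rpow hs.1.le (norm_nonneg v), hC,
            Real.rpow_add_one' (norm_nonneg v) hα1]
          field_simp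
  have hanti : AntitoneOn φ (Icc 0 1) := by
    refine antitoneOn_of_hasDerivWithinAt_nonpos (convex_Icc 0 1)
      (fun s hs => (hφ s hs).continuousAt.continuousWithinAt)
      (fun s hs => (hφ s (interior_subset hs)).hasDerivWithinAt) ?_
    simpa only [interior_Icc] using hφ'
  have h01 := hanti (left_mem_Icc.2 zero_le_one) (right_mem_Icc.2 zero_le_one) zero_le_one
  simp only [φ, zero_smul, add_zero, one_smul, v, add_sub_cancel, zero_mul, sub_zero,
    Real.zero_rpow hα1, mul_zero, one_mul, Real.one_rpow, mul_one] at h01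
  linarith

lemma le_of_forall_mul_rpow_le {a b d p q : ℝ} (ha : 0 < a) (hd : 0 < d)
    (h : ∀ r ∈ Ioc 0 d, a * r ^ p ≤ b * r ^ q) : q ≤ p := by
  by_contra! hpq
  have hlim : Filter.Tendsto (fun r : ℝ => b * r ^ (q - p)) (nhdsWithin 0 (Ioi 0)) (nhds 0) := by
    have := ((Real.continuousAt_rpow_const 0 (q - p) (Or.inr (by linarith))).const_mul b).tendsto
    simpa [Real.zero_rpow (by linarith : q - p ≠ 0)] using this.mono_left nhdsWithin_le_nhds
  have hbound : ∀ᶠ r in nhdsWithin 0 (Ioi 0), a ≤ b * r ^ (q - p) := by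
    filter_upwards [Ioo_mem_nhdsGT hd] with r hr
    have hrp : 0 < r ^ p := Real.rpow_pos_of_pos hr.1 p
    rw [Real.rpow_sub hr.1, mul_div_assoc', le_div_iff₀ hrp]
    exact h r ⟨hr.1, hr.2.le⟩
  linarith [ge_of_tendsto hlim hbound]

theorem stmt15_general (f : X → ℝ) (hconv : ConvexOn ℝ univ f)
    (hlsc : LowerSemicontinuous f) (Ω : Set X) (hΩ : Convex ℝ Ω)
    (p γ α L : ℝ) (hp : 1 ≤ p) (hγ : 0 < γ) (hα : 0 < α)
    (hmin : {z : X | ∀ y, f z ≤ f y}.Nonempty)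
    (f' : X → X) (hdiff : ∀ x ∈ Ω, HasGradientAt f (f' x) x)
    (hhold : ∀ x ∈ Ω, ∀ y ∈ Ω, ‖f' x - f' y‖ ≤ L * ‖x - y‖ ^ α)
    (hcond : ∀ x ∈ Ω, γ / p * infDist x {z : X | ∀ y, f z ≤ f y} ^ p ≤ f x - ⨅ y, f y)
    (hproj : {y | ∃ x ∈ Ω, y ∈ {z : X | ∀ w, f z ≤ f w} ∧
        dist x y = infDist x {z : X | ∀ w, f z ≤ f w}} ⊂ Ω) :
    α + 1 ≤ p ∧ (p = α + 1 → γ ≤ L) := by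
  set S := {z : X | ∀ y, f z ≤ f y}
  obtain ⟨x, hxΩ, hxP⟩ := exists_of_ssubset hproj
  obtain ⟨x₀, hx₀S, hx₀⟩ :=
    hlsc.isClosed_setOf_forall_le.isComplete.exists_dist_eq_infDist hmin
      hconv.convex_setOf_forall_le x
  have hx₀Ω : x₀ ∈ Ω := hproj.1 ⟨x, hxΩ, hx₀S, hx₀⟩
  have hd : 0 < dist x x₀ := dist_pos.2 fun h => hxP ⟨x, hxΩ, h ▸ hx₀S, h ▸ hx₀⟩
  have hinf : ⨅ y, f y = f x₀ :=
    le_antisymm (ciInf_le ⟨f x₀, forall_mem_range.2 hx₀S⟩ x₀) (le_ciInf hx₀S)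
  have hgrad : f' x₀ = 0 :=
    IsLocalMin.hasGradientAt_eq_zero (.of_forall hx₀S) (hdiff x₀ hx₀Ω)
  have key : ∀ r ∈ Ioc 0 (dist x x₀), γ / p * r ^ p ≤ L / (α + 1) * r ^ (α + 1) := by
    rintro r ⟨hr0, hrd⟩
    set t := r / dist x x₀
    have ht : t ∈ Icc (0 : ℝ) 1 := ⟨by positivity, (div_le_one hd).2 hrd⟩
    have hyΩ : x₀ + t • (x - x₀) ∈ Ω := by
      simpa [AffineMap.lineMap_apply_module', add_comm] using hΩ.lineMap_mem hx₀Ω hxΩ ht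
    have hr : t * infDist x S = r := by rw [← hx₀]; exact div_mul_cancel₀ r hd.ne'
    have hnorm : ‖t • (x - x₀)‖ = r := by
      rw [norm_smul, Real.norm_of_nonneg ht.1, ← dist_eq_norm, hx₀, hr]
    calc γ / p * r ^ p ≤ γ / p * infDist (x₀ + t • (x - x₀)) S ^ p := by
          rw [← hr]
          gcongr
          · exact mul_nonneg ht.1 infDist_nonneg
          exact mul_infDist_le_infDist_add_smul_sub hx₀ ht.2
      _ ≤ f (x₀ + t • (x - x₀)) - f x₀ := hinf ▸ hcond _ hyΩ
      _ ≤ L / (α + 1) * r ^ (α + 1) := by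
          simpa [hgrad, hnorm] using sub_sub_inner_le_of_holder hΩ hα.le hdiff hhold hx₀Ω hyΩ
  refine ⟨le_of_forall_mul_rpow_le (by positivity) hd key, fun hpα => ?_⟩
  have h := key _ ⟨hd, le_rfl⟩
  rw [hpα] at h
  have := le_of_mul_le_mul_right h (by positivity)
  rwa [div_le_div_iff_of_pos_right (by linarith)] at this

/-- Proposition 4.11: if `f` is `p`-conditioned with constant `γ` on a convex set `Ω`
with `proj(Ω, argmin f) ⊊ Ω`, and `f` is differentiable on `Ω` with `α`-Hölder gradient
(constant `L`), then `p ≥ α + 1`; and if `p = α + 1` then `γ ≤ L`. -/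
theorem stmt15 (f : X → ℝ) (hconv : ConvexOn ℝ univ f)
    (hlsc : LowerSemicontinuous f) (Ω : Set X) (hΩ : Convex ℝ Ω)
    (p γ α L : ℝ) (hp : 1 ≤ p) (hγ : 0 < γ) (hα : 0 < α) (hL : 0 < L)
    (hmin : {z : X | ∀ y, f z ≤ f y}.Nonempty)
    (f' : X → X) (hdiff : ∀ x ∈ Ω, HasGradientAt f (f' x) x)
    (hhold : ∀ x ∈ Ω, ∀ y ∈ Ω, ‖f' x - f' y‖ ≤ L * ‖x - y‖ ^ α)
    (hcond : ∀ x ∈ Ω, γ / p * infDist x {z : X | ∀ y, f z ≤ f y} ^ p ≤ f x - ⨅ y, f y)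
    (hproj : {y | ∃ x ∈ Ω, y ∈ {z : X | ∀ w, f z ≤ f w} ∧
        dist x y = infDist x {z : X | ∀ w, f z ≤ f w}} ⊂ Ω) :
    α + 1 ≤ p ∧ (p = α + 1 → γ ≤ L) :=
  stmt15_general f hconv hlsc Ω hΩ p γ α L hp hγ hα hmin f' hdiff hhold hcond hproj
end

section
/- Let X = ℓ²(ℕ) with canonical basis (e_k), let (σ_k) be strictly positive reals converging to 0, let A : X → X be the diagonal operator Ax = Σ σ_k x_k e_k, and f(x) = (1/2)‖Ax‖². Fix μ, δ > 0 and suppose f satisfies the p-Łojasiewicz inequality with constant c on the set X_{μ,δ}(0) (which contains all v^k := δσ_k^{2μ}e_k): (½‖Ax‖²)^{1-1/p} ≤ c‖A*Ax‖ for all such x. Then p ≥ 2 + 1/μ, and if p = 2 + 1/μ then c ≥ 2^{-(μ+1)/(2μ+1)}·δ^{1/(1+2μ)}. -/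
/-!
Testing the Łojasiewicz inequality on `v = δ σ_k^{2μ} e_k` (the image of `w = δ e_k` under
`(A*A)^μ`) gives `(δ²/2)^{1-1/p} σ_k^{(4μ+2)(1-1/p)} ≤ c δ σ_k^{2μ+2}`. Letting `σ_k → 0`
forces `2μ + 2 ≤ (4μ+2)(1-1/p)`, i.e. `p ≥ 2 + 1/μ`; at `p = 2 + 1/μ` both powers of `σ_k`
coincide and cancel, leaving the bound on `c`.
-/

open Real Filter Topology

section Diagonal

variable {ι : Type*} [DecidableEq ι] {σ : ι → ℝ}
  {A : lp (fun _ : ι => ℝ) 2 →L[ℝ] lp (fun _ : ι => ℝ) 2}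

theorem lp_single_mul_apply (k j : ι) (s : ℝ) :
    lp.single (E := fun _ : ι => ℝ) 2 k (σ k * s) j
      = σ j * lp.single (E := fun _ : ι => ℝ) 2 k s j :=
  Pi.single_mul_right_apply k j σ s

theorem diagonal_apply_single (hA : ∀ x k, A x k = σ k * x k) (k : ι) (s : ℝ) :
    A (lp.single 2 k s) = lp.single 2 k (σ k * s) :=
  lp.ext <| funext fun j => by rw [hA, lp_single_mul_apply]

theorem adjoint_apply_of_diagonal (hA : ∀ x k, A x k = σ k * x k) (y : lp (fun _ : ι => ℝ) 2)
    (k : ι) : ContinuousLinearMap.adjoint A y k = σ k * y k := by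
  have h := ContinuousLinearMap.adjoint_inner_left A (lp.single 2 k 1) y
  rw [diagonal_apply_single hA, lp.inner_single_right, lp.inner_single_right] at h
  simpa [mul_comm] using h

theorem adjoint_comp_self_apply_single_of_diagonal (hA : ∀ x k, A x k = σ k * x k) (k : ι)
    (s : ℝ) :
    (ContinuousLinearMap.adjoint A ∘L A) (lp.single 2 k s) = lp.single 2 k (σ k ^ 2 * s) := by
  rw [ContinuousLinearMap.comp_apply, diagonal_apply_single hA]
  refine lp.ext <| funext fun j => ?_
  rw [adjoint_apply_of_diagonal hA, ← lp_single_mul_apply, ← mul_assoc, sq]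

theorem lojasiewicz_at_scaled_single (hA : ∀ x k, A x k = σ k * x k) {μ δ q c : ℝ} (hδ : 0 < δ)
    {k : ι} (hσk : 0 < σ k)
    (h : ((1:ℝ) / 2 * ‖A (lp.single 2 k (σ k ^ (2 * μ) * δ))‖ ^ 2) ^ q
      ≤ c * ‖(ContinuousLinearMap.adjoint A ∘L A) (lp.single 2 k (σ k ^ (2 * μ) * δ))‖) :
    (δ ^ 2 / 2) ^ q * σ k ^ ((4 * μ + 2) * q) ≤ c * δ * σ k ^ (2 * μ + 2) := by
  have hA_norm : ‖A (lp.single 2 k (σ k ^ (2 * μ) * δ))‖ = σ k ^ (2 * μ + 1) * δ := by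
    rw [diagonal_apply_single hA, lp.norm_single two_pos, norm_of_nonneg (by positivity),
      rpow_add_one hσk.ne']
    ring
  have hAA_norm : ‖(ContinuousLinearMap.adjoint A ∘L A) (lp.single 2 k (σ k ^ (2 * μ) * δ))‖
      = σ k ^ (2 * μ + 2) * δ := by
    rw [adjoint_comp_self_apply_single_of_diagonal hA, lp.norm_single two_pos,
      norm_of_nonneg (by positivity), rpow_add hσk, rpow_two]
    ring
  have hf : (1:ℝ) / 2 * (σ k ^ (2 * μ + 1) * δ) ^ 2 = δ ^ 2 / 2 * σ k ^ (4 * μ + 2) := by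
    rw [show 4 * μ + 2 = (2 * μ + 1) * (2 : ℕ) by push_cast; ring, rpow_mul_natCast hσk.le]
    ring
  rwa [hA_norm, hAA_norm, hf, mul_rpow (by positivity) (by positivity), ← rpow_mul hσk.le,
    mul_comm (σ k ^ _) δ, ← mul_assoc] at h

end Diagonal

theorem exponent_le_of_forall_mul_rpow_le {t : ℕ → ℝ} (ht : ∀ k, 0 < t k)
    (ht0 : Tendsto t atTop (𝓝 0)) {a b C D : ℝ} (hC : 0 < C)
    (h : ∀ k, C * t k ^ a ≤ D * t k ^ b) : b ≤ a := by
  by_contra! hab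
  have hle : ∀ k, C ≤ D * t k ^ (b - a) := fun k => by
    rw [rpow_sub (ht k), mul_div_assoc']
    exact (le_div_iff₀ (rpow_pos_of_pos (ht k) a)).2 (h k)
  have hlim : Tendsto (fun k => D * t k ^ (b - a)) atTop (𝓝 0) := by
    simpa [zero_rpow (sub_pos.2 hab).ne'] using
      ((continuousAt_rpow_const 0 (b - a) (Or.inr (sub_pos.2 hab).le)).tendsto.comp
        ht0).const_mul D
  linarith [ge_of_tendsto' hlim hle]

theorem lojasiewicz_exponent_le_iff {μ p : ℝ} (hμ : 0 < μ) (hp : 0 < p) :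
    2 * μ + 2 ≤ (4 * μ + 2) * (1 - 1 / p) ↔ 2 + 1 / μ ≤ p := by
  rw [← sub_nonneg, ← sub_nonneg (b := 2 + 1 / μ)]
  have : (4 * μ + 2) * (1 - 1 / p) - (2 * μ + 2) = 2 * μ / p * (p - (2 + 1 / μ)) := by
    field_simp; ring
  rw [this]
  exact mul_nonneg_iff_of_pos_left (by positivity)

theorem one_sub_inv_critical_exponent {μ : ℝ} (hμ : 0 < μ) :
    1 - 1 / (2 + 1 / μ) = (μ + 1) / (2 * μ + 1) := by
  field_simp; ring

theorem half_sq_rpow_critical_exponent {μ δ : ℝ} (hμ : 0 < μ) (hδ : 0 < δ) :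
    (δ ^ 2 / 2) ^ ((μ + 1) / (2 * μ + 1))
      = (2:ℝ) ^ (-((μ + 1) / (2 * μ + 1))) * δ ^ ((1:ℝ) / (1 + 2 * μ)) * δ := by
  rw [div_eq_mul_inv, mul_rpow (by positivity) (by norm_num), inv_rpow (by norm_num),
    ← rpow_neg (by norm_num), ← rpow_natCast δ 2, ← rpow_mul hδ.le, mul_assoc,
    ← rpow_add_one hδ.ne', mul_comm]
  congr 2
  field_simp; ring

theorem stmt19_general (σ : ℕ → ℝ) (hσ : ∀ k, 0 < σ k)
    (hσ0 : Filter.Tendsto σ Filter.atTop (nhds 0))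
    (A : lp (fun _ : ℕ => ℝ) 2 →L[ℝ] lp (fun _ : ℕ => ℝ) 2)
    (hA : ∀ (x : lp (fun _ : ℕ => ℝ) 2) (k : ℕ), A x k = σ k * x k)
    (μ δ p c : ℝ) (hμ : 0 < μ) (hδ : 0 < δ) (hp : 0 < p)
    (hLoj : ∀ x : lp (fun _ : ℕ => ℝ) 2,
      (∃ w : lp (fun _ : ℕ => ℝ) 2, ‖w‖ ≤ δ ∧ ∀ k, x k = σ k ^ (2 * μ) * w k) →
      ((1:ℝ)/2 * ‖A x‖ ^ 2) ^ (1 - 1/p)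
        ≤ c * ‖((ContinuousLinearMap.adjoint A).comp A) x‖) :
    2 + 1/μ ≤ p ∧
    (p = 2 + 1/μ →
      (2:ℝ) ^ (-((μ + 1) / (2 * μ + 1))) * δ ^ ((1:ℝ) / (1 + 2 * μ)) ≤ c) := by
  have hsource : ∀ k, ∃ w : lp (fun _ : ℕ => ℝ) 2, ‖w‖ ≤ δ ∧
      ∀ j, lp.single (E := fun _ : ℕ => ℝ) 2 k (σ k ^ (2 * μ) * δ) j = σ j ^ (2 * μ) * w j :=
    fun k => ⟨lp.single 2 k δ, by rw [lp.norm_single two_pos, norm_of_nonneg hδ.le],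
      fun j => lp_single_mul_apply (σ := fun j => σ j ^ (2 * μ)) k j δ⟩
  have key : ∀ k, (δ ^ 2 / 2) ^ (1 - 1 / p) * σ k ^ ((4 * μ + 2) * (1 - 1 / p))
      ≤ c * δ * σ k ^ (2 * μ + 2) := fun k =>
    lojasiewicz_at_scaled_single hA hδ (hσ k) (hLoj _ (hsource k))
  refine ⟨(lojasiewicz_exponent_le_iff hμ hp).1 <|
    exponent_le_of_forall_mul_rpow_le hσ hσ0 (by positivity) key, fun hp_crit => ?_⟩
  rw [hp_crit, one_sub_inv_critical_exponent hμ, half_sq_rpow_critical_exponent hμ hδ] at key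
  have hcrit : (4 * μ + 2) * ((μ + 1) / (2 * μ + 1)) = 2 * μ + 2 := by
    field_simp; ring
  have h0 := key 0
  rwa [hcrit, mul_le_mul_iff_left₀ (rpow_pos_of_pos (hσ 0) _),
    mul_le_mul_iff_left₀ hδ] at h0

/-- Optimality part of Theorem 5.7: on `X = ℓ²(ℕ)` with the diagonal operator
`Ax = Σ σₖ xₖ eₖ` (with `σₖ > 0`, `σₖ → 0`) and `f(x) = (1/2)‖Ax‖²`, if `f` satisfies
the `p`-Łojasiewicz inequality with constant `c` on the source set
`X_{μ,δ}(0) = {(A*A)^μ w : ‖w‖ ≤ δ}` (i.e. `{x | xₖ = σₖ^{2μ} wₖ, ‖w‖ ≤ δ}`), then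
`p ≥ 2 + 1/μ`, and if `p = 2 + 1/μ` then `c ≥ 2^{-(μ+1)/(2μ+1)}·δ^{1/(1+2μ)}`. -/
theorem stmt19 (σ : ℕ → ℝ) (hσ : ∀ k, 0 < σ k)
    (hσ0 : Filter.Tendsto σ Filter.atTop (nhds 0))
    (A : lp (fun _ : ℕ => ℝ) 2 →L[ℝ] lp (fun _ : ℕ => ℝ) 2)
    (hA : ∀ (x : lp (fun _ : ℕ => ℝ) 2) (k : ℕ), A x k = σ k * x k)
    (μ δ p c : ℝ) (hμ : 0 < μ) (hδ : 0 < δ) (hp : 0 < p) (hc : 0 < c)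
    (hLoj : ∀ x : lp (fun _ : ℕ => ℝ) 2,
      (∃ w : lp (fun _ : ℕ => ℝ) 2, ‖w‖ ≤ δ ∧ ∀ k, x k = σ k ^ (2 * μ) * w k) →
      ((1:ℝ)/2 * ‖A x‖ ^ 2) ^ (1 - 1/p)
        ≤ c * ‖((ContinuousLinearMap.adjoint A).comp A) x‖) :
    2 + 1/μ ≤ p ∧
    (p = 2 + 1/μ →
      (2:ℝ) ^ (-((μ + 1) / (2 * μ + 1))) * δ ^ ((1:ℝ) / (1 + 2 * μ)) ≤ c) :=
  stmt19_general σ hσ hσ0 A hA μ δ p c hμ hδ hp hLoj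
end
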